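/- arXiv:2504.19889 — 7 statements merged into one kernel-verified Lean document; each statement's English description precedes it below -/
import Mathlib

section
/- Let Q, L be nonnegative reals, and let C1 = α·Q/μ and C2 = β/ν + (α/μ)·max(Q + L - (μ-λ)/ν, 0), with α > β > 0, μ > λ > 0, ν > 0. Then C1 > C2 if and only if Q > μβ/(αν) and L < (μ-λ)/ν - μβ/(αν). -/
theorem lounge_decision_rule
    (Q L α β lam μ ν : ℝ)
    (hQ : 0 ≤ Q) (hL : 0 ≤ L)
    (hβ : 0 < β) (hαβ : β < α)
    (hlam : 0 < lam) (hlamμ : lam < μ) (hν : 0 < ν)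
    (C1 C2 : ℝ)
    (hC1 : C1 = α * Q / μ)
    (hC2 : C2 = β / ν + (α / μ) * max (Q + L - (μ - lam) / ν) 0) :
    C1 > C2 ↔ (Q > μ * β / (α * ν) ∧ L < (μ - lam) / ν - μ * β / (α * ν)) := by
  subst hC1 hC2
  have hμ : 0 < μ := hlam.trans hlamμ
  have hα : 0 < α := hβ.trans hαβ
  have hk : μ * β / (α * ν) * (α * ν) = μ * β := div_mul_cancel₀ _ (by positivity)
  have hd : (μ - lam) / ν * ν = μ - lam := div_mul_cancel₀ _ (by positivity)
  set k := μ * β / (α * ν) with hkdef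
  set d := (μ - lam) / ν with hddef
  have hkQ : (k < Q) ↔ μ * β < Q * (α * ν) := by
    rw [hkdef, div_lt_iff₀ (by positivity)]
  have hdL : (L < d - k) ↔ μ * β < (d - L) * (α * ν) := by
    rw [show (L < d - k) ↔ k < d - L from by constructor <;> intro <;> linarith,
      hkdef, div_lt_iff₀ (by positivity)]
  rcases le_or_gt (Q + L - d) 0 with h | h
  · rw [max_eq_right h]
    have key : β / ν + α / μ * 0 < α * Q / μ ↔ k < Q := by
      rw [mul_zero, add_zero, div_lt_div_iff₀ hν hμ, hkQ]
      constructor <;> intro <;> nlinarith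
    rw [gt_iff_lt, key]
    constructor
    · intro hQk
      refine ⟨hQk, ?_⟩
      linarith
    · exact fun h => h.1
  · rw [max_eq_left h.le]
    have key : β / ν + α / μ * (Q + L - d) < α * Q / μ ↔ L < d - k := by
      rw [hdL]
      rw [show α * Q / μ = α / μ * Q by ring, ← sub_pos]
      rw [show α / μ * Q - (β / ν + α / μ * (Q + L - d)) = α * (d - L) / μ - β / ν by ring]
      rw [sub_pos, div_lt_div_iff₀ hν hμ]
      constructor <;> intro <;> nlinarith
    rw [gt_iff_lt, key]
    constructor
    · intro hh
      constructor
      · rw [gt_iff_lt, hkQ]; nlinarith [hdL.mp hh]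
      · exact hh
    · exact fun h => h.2
end

section
/- The sequence π_{q+1,0} = ρ^{q+1}(1-ρ)ν/(ν+μ), π_{q,1} = ρ^{q+1}(1-ρ)μ/(ν+μ) satisfies, for all q, both the relation π_{q+1,0} + π_{q,1} = ρ^{q+1}(1-ρ) and the balance equations π_{q+2,0} = (θ/μ)π_{q+1,0} - (ν/μ)ρ^{q+1}(1-ρ) and π_{q+1,1} = (θ/μ)π_{q,1} - (λ/μ)ρ^q(1-ρ), where θ = λ+μ+ν. -/
theorem tail_stationary_B1
    (lam μ ν : ℝ) (hlam : 0 < lam) (hμ : 0 < μ) (hν : 0 < ν)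
    (ρ θ : ℝ) (hρ : ρ = lam / μ) (hρ1 : ρ < 1) (hθ : θ = lam + μ + ν)
    (π0 π1 : ℕ → ℝ)
    (hπ0 : ∀ q : ℕ, π0 (q + 1) = ρ ^ (q + 1) * (1 - ρ) * ν / (ν + μ))
    (hπ1 : ∀ q : ℕ, π1 q = ρ ^ (q + 1) * (1 - ρ) * μ / (ν + μ)) :
    (∀ q : ℕ, π0 (q + 1) + π1 q = ρ ^ (q + 1) * (1 - ρ)) ∧
    (∀ q : ℕ, π0 (q + 2) = (θ / μ) * π0 (q + 1) - (ν / μ) * ρ ^ (q + 1) * (1 - ρ)) ∧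
    (∀ q : ℕ, π1 (q + 1) = (θ / μ) * π1 q - (lam / μ) * ρ ^ q * (1 - ρ)) := by
  have hνμ : ν + μ ≠ 0 := by positivity
  have hμ' : μ ≠ 0 := ne_of_gt hμ
  refine ⟨?_, ?_, ?_⟩
  · intro q
    rw [hπ0 q, hπ1 q]
    field_simp
  · intro q
    have h1 := hπ0 (q + 1)
    rw [show q + 1 + 1 = q + 2 from rfl] at h1
    rw [h1, hπ0 q, hρ, hθ]
    simp only [div_pow]
    field_simp
    ring
  · intro q
    rw [hπ1 (q + 1), hπ1 q, hρ, hθ]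
    simp only [div_pow]
    field_simp
    ring
end

section
/- If π_{q+1,0} = c·π_{q,1} for all q ≥ q0, where the sequences satisfy π_{q+1,0} + π_{q,1} = ρ^{q+1}(1-ρ) and the balance equations π_{q+2,0} = (θ/μ)π_{q+1,0} - (ν/μ)ρ^{q+1}(1-ρ), π_{q+1,1} = (θ/μ)π_{q,1} - (λ/μ)ρ^q(1-ρ) with θ = λ+μ+ν, and all terms are positive, then c = ν/μ. -/
theorem ratio_is_nu_over_mu
    (lam μ ν : ℝ) (hlam : 0 < lam) (hμ : 0 < μ) (hν : 0 < ν)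
    (ρ θ : ℝ) (hρ : ρ = lam / μ) (hρ0 : 0 < ρ) (hρ1 : ρ < 1) (hθ : θ = lam + μ + ν)
    (q0 : ℕ) (π0 π1 : ℕ → ℝ) (c : ℝ)
    (hpos0 : ∀ q, q0 ≤ q → 0 < π0 q)
    (hpos1 : ∀ q, q0 ≤ q → 0 < π1 q)
    (hratio : ∀ q, q0 ≤ q → π0 (q + 1) = c * π1 q)
    (hsum : ∀ q, q0 ≤ q → π0 (q + 1) + π1 q = ρ ^ (q + 1) * (1 - ρ))
    (hbal0 : ∀ q, q0 ≤ q → π0 (q + 2) = (θ / μ) * π0 (q + 1) - (ν / μ) * ρ ^ (q + 1) * (1 - ρ))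
    (hbal1 : ∀ q, q0 ≤ q → π1 (q + 1) = (θ / μ) * π1 q - (lam / μ) * ρ ^ q * (1 - ρ)) :
    c = ν / μ := by
  have h1 := hbal0 q0 le_rfl
  have h2 := hbal1 q0 le_rfl
  have h3 := hratio q0 le_rfl
  have h4 := hratio (q0 + 1) (Nat.le_succ_of_le le_rfl)
  have hX : ρ ^ q0 * (1 - ρ) > 0 := mul_pos (pow_pos hρ0 q0) (by linarith)
  -- From h1, h4, h2, h3:
  -- c * ((θ/μ) π1 q0 - (lam/μ) ρ^q0 (1-ρ)) = (θ/μ)(c π1 q0) - (ν/μ) ρ^(q0+1)(1-ρ)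
  have key : c * ((lam / μ) * ρ ^ q0 * (1 - ρ)) = (ν / μ) * ρ ^ (q0 + 1) * (1 - ρ) := by
    have := h1
    rw [h4, h2, h3] at this
    ring_nf at this ⊢
    linarith
  have hpow : ρ ^ (q0 + 1) = ρ * ρ ^ q0 := by ring
  rw [hpow, hρ] at key
  have hμ' : μ ≠ 0 := ne_of_gt hμ
  have hlam' : lam ≠ 0 := ne_of_gt hlam
  have hX' : ρ ^ q0 * (1 - ρ) ≠ 0 := ne_of_gt hX
  field_simp at key
  have hml : 0 < μ - lam := by
    have : lam / μ < 1 := hρ ▸ hρ1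
    have := (div_lt_one hμ).mp this
    linarith
  set P : ℝ := lam * lam ^ q0 * (μ - lam) * (μ * μ ^ q0 * μ) with hP
  have hPpos : 0 < P := by
    positivity
  have key2 : (c * μ) * P = ν * P := by rw [hP]; ring_nf; linear_combination (lam * lam ^ q0 * (μ * μ ^ q0 * μ)) * key
  have : c * μ = ν := mul_right_cancel₀ (ne_of_gt hPpos) key2
  field_simp
  linarith
end

section
/- Let ρ ∈ (0,1) and A ≥ 0 an integer. The quantities π̃_{0,0} = 1-ρ, π̃_{q,0} = (1-ρ)ρ^q(1-ρ^{A+2-q})/(1-ρ^{A+1}) for 1 ≤ q ≤ A, π̃_{A+1,l} = ρ^{A+l+1}(1-ρ)²/(1-ρ^{A+1}) for l ≥ 0, and π̃_{q,l} = ρ^{A+l+1}(1-ρ)²/(1-ρ^{A+1}) for 1 ≤ q ≤ A, l ≥ 1, are all nonnegative and sum to 1 over the state space {(q,l): 0 ≤ q ≤ A+1, l ≥ 0} (with π̃_{0,l} = 0 for l ≥ 1). -/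
/-- Stationary distribution of the approximating system (ν → 0 limit). -/
noncomputable def piTilde (ρ : ℝ) (A : ℕ) (q l : ℕ) : ℝ :=
  if q = 0 then (if l = 0 then 1 - ρ else 0)
  else if q ≤ A + 1 then
    (if l = 0 then (1 - ρ) * ρ ^ q * (1 - ρ ^ (A + 2 - q)) / (1 - ρ ^ (A + 1))
     else ρ ^ (A + l + 1) * (1 - ρ) ^ 2 / (1 - ρ ^ (A + 1)))
  else 0

theorem piTilde_is_distribution
    (ρ : ℝ) (hρ0 : 0 < ρ) (hρ1 : ρ < 1) (A : ℕ) :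
    (∀ q l : ℕ, 0 ≤ piTilde ρ A q l) ∧
    HasSum (fun p : ℕ × ℕ => piTilde ρ A p.1 p.2) 1 := by
  have hρ0' : (0:ℝ) ≤ ρ := hρ0.le
  have h1ρ : (0:ℝ) ≤ 1 - ρ := by linarith
  have h1ρ' : (1:ℝ) - ρ ≠ 0 := by
    have : (0:ℝ) < 1 - ρ := by linarith
    exact this.ne'
  have hD : 0 < 1 - ρ ^ (A + 1) := by
    have := pow_lt_one₀ hρ0' hρ1 (by omega : A + 1 ≠ 0)
    linarith
  have hpowle : ∀ n : ℕ, ρ ^ n ≤ 1 := fun n => pow_le_one₀ hρ0' hρ1.le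
  have hnonneg : ∀ q l : ℕ, 0 ≤ piTilde ρ A q l := by
    intro q l
    unfold piTilde
    split_ifs with h1 h2 h3 h4
    · linarith
    · exact le_refl 0
    · apply div_nonneg _ hD.le
      have := hpowle (A + 2 - q)
      have : (0:ℝ) ≤ 1 - ρ ^ (A + 2 - q) := by linarith
      exact mul_nonneg (mul_nonneg h1ρ (pow_nonneg hρ0' q)) this
    · apply div_nonneg _ hD.le
      exact mul_nonneg (pow_nonneg hρ0' _) (sq_nonneg _)
    · exact le_refl 0
  refine ⟨hnonneg, ?_⟩
  set D := 1 - ρ ^ (A + 1) with hDdef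
  set g : ℕ → ℝ := fun q =>
    if q = 0 then 1 - ρ else if q ≤ A + 1 then (1 - ρ) * ρ ^ q / D else 0 with hgdef
  have hfib : ∀ q, HasSum (fun l => piTilde ρ A q l) (g q) := by
    intro q
    rcases eq_or_ne q 0 with rfl | hq0
    · simpa [piTilde, hgdef] using hasSum_ite_eq (0 : ℕ) (1 - ρ)
    · by_cases hqA : q ≤ A + 1
      · set c : ℝ := ρ ^ (A + 1) * (1 - ρ) ^ 2 / D with hc
        set t : ℝ := (1 - ρ) * ρ ^ q * (1 - ρ ^ (A + 2 - q)) / D with ht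
        have hgeo : HasSum (fun l : ℕ => c * ρ ^ l) (c * (1 - ρ)⁻¹) := by
          simpa [one_div] using (hasSum_geometric_of_lt_one hρ0' hρ1).mul_left c
        have hdelta : HasSum (fun l : ℕ => if l = 0 then t - c else 0) (t - c) :=
          hasSum_ite_eq (0 : ℕ) (t - c)
        have hsum := hgeo.add hdelta
        have hfun : (fun l : ℕ => c * ρ ^ l + if l = 0 then t - c else 0)
            = fun l => piTilde ρ A q l := by
          funext l
          rcases eq_or_ne l 0 with rfl | hl
          · simp [piTilde, hq0, hqA, ht, hDdef]
          · have hAL : ρ ^ (A + l + 1) = ρ ^ (A + 1) * ρ ^ l := by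
              rw [← pow_add]; ring_nf
            simp [piTilde, hq0, hqA, hl, hc, hAL]
            ring
        rw [hfun] at hsum
        have hval : c * (1 - ρ)⁻¹ + (t - c) = g q := by
          have hqE : ρ ^ q * ρ ^ (A + 2 - q) = ρ ^ (A + 2) := by
            rw [← pow_add]; congr 1; omega
          have ht2 : t = ((1 - ρ) * ρ ^ q - (1 - ρ) * ρ ^ (A + 2)) / D := by
            rw [ht, ← hqE]; ring
          have hc2 : c * (1 - ρ)⁻¹ = ρ ^ (A + 1) * (1 - ρ) / D := by
            rw [hc]; field_simp
          have hgq : g q = (1 - ρ) * ρ ^ q / D := by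
            simp [hgdef, hq0, hqA]
          rw [hc2, ht2, hc, hgq]
          have hDne : D ≠ 0 := hD.ne'
          field_simp
          ring
        rwa [hval] at hsum
      · have h0 : (fun l => piTilde ρ A q l) = fun _ => (0:ℝ) := by
          funext l; simp [piTilde, hq0, hqA]
        have hgq : g q = 0 := by simp [hgdef, hq0, hqA]
        rw [h0, hgq]
        exact hasSum_zero
  have hgsum : HasSum g 1 := by
    have hsupp : ∀ q ∉ Finset.range (A + 2), g q = 0 := by
      intro q hq
      simp only [Finset.mem_range] at hq
      have hq0 : q ≠ 0 := by omega
      have hqA : ¬ q ≤ A + 1 := by omega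
      simp [hgdef, hq0, hqA]
    have h : HasSum g (∑ q ∈ Finset.range (A + 2), g q) := hasSum_sum_of_ne_finset_zero hsupp
    have hval : ∑ q ∈ Finset.range (A + 2), g q = 1 := by
      rw [Finset.sum_range_succ']
      have h1 : ∀ i ∈ Finset.range (A + 1), g (i + 1) = (1 - ρ) * ρ ^ (i + 1) / D := by
        intro i hi
        simp only [Finset.mem_range] at hi
        have : i + 1 ≤ A + 1 := by omega
        simp [hgdef, this]
      rw [Finset.sum_congr rfl h1]
      have hgeom : ∑ i ∈ Finset.range (A + 1), ρ ^ i = (ρ ^ (A + 1) - 1) / (ρ - 1) :=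
        geom_sum_eq hρ1.ne (A + 1)
      have hexp : ∀ i : ℕ, (1 - ρ) * ρ ^ (i + 1) / D = ((1 - ρ) * ρ / D) * ρ ^ i := by
        intro i; rw [pow_succ]; ring
      simp only [hexp]
      rw [← Finset.mul_sum, hgeom]
      have hgq0 : g 0 = 1 - ρ := by simp [hgdef]
      rw [hgq0]
      have hρm1 : ρ - 1 ≠ 0 := sub_ne_zero_of_ne hρ1.ne
      have hDne : D ≠ 0 := hD.ne'
      rw [hDdef] at hDne ⊢
      field_simp
      ring
    rwa [hval] at h
  have hnn : 0 ≤ fun p : ℕ × ℕ => piTilde ρ A p.1 p.2 := fun p => hnonneg p.1 p.2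
  have hsummable : Summable (fun p : ℕ × ℕ => piTilde ρ A p.1 p.2) := by
    rw [summable_prod_of_nonneg hnn]
    constructor
    · exact fun q => (hfib q).summable
    · have : (fun q => ∑' l, piTilde ρ A q l) = g := by
        funext q; exact (hfib q).tsum_eq
      rw [this]; exact hgsum.summable
  have htsum : ∑' p : ℕ × ℕ, piTilde ρ A p.1 p.2 = 1 := by
    rw [Summable.tsum_prod' hsummable (fun q => (hfib q).summable)]
    calc ∑' q, ∑' l, piTilde ρ A q l = ∑' q, g q := by
          congr 1; funext q; exact (hfib q).tsum_eq
      _ = 1 := hgsum.tsum_eq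
  simpa [htsum] using hsummable.hasSum
end

section
/- For ρ ∈ (0,1) and integer A ≥ 0, the distribution π̃ of the approximating system satisfies, for every n ≥ 0, Σ_{l≥0, q≥0, q+l=n} π̃_{q,l} — summed over the valid states with q ≤ A+1 — equals ρⁿ(1-ρ). Specifically: for n ≤ A+1 only l=0 and (for n ≥ 2) the states (q, n-q) with 1 ≤ q ≤ min(n-1, A+1) contribute, and for n > A+1 only states with q ≤ A+1 contribute. -/
theorem piTilde_total_population_geometric
    (ρ : ℝ) (hρ0 : 0 < ρ) (hρ1 : ρ < 1) (A : ℕ) :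
    ∀ n : ℕ, ∑ q ∈ Finset.range (min n (A + 1) + 1), piTilde ρ A q (n - q)
      = ρ ^ n * (1 - ρ) := by
  have hρ1' : ρ ≠ 1 := ne_of_lt hρ1
  have hD : (1 : ℝ) - ρ ^ (A + 1) ≠ 0 := by
    have : ρ ^ (A + 1) < 1 := pow_lt_one₀ hρ0.le hρ1 (Nat.succ_ne_zero A)
    linarith
  have hρ10 : ρ - 1 ≠ 0 := sub_ne_zero.mpr hρ1'
  intro n
  rcases n with _ | n
  · simp [piTilde]
  by_cases h : n + 1 ≤ A + 1
  · -- case n+1 ≤ A+1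
    have hnA : n ≤ A := Nat.lt_succ_iff.mp (Nat.lt_succ_iff.mp (Nat.lt_succ_of_le h))
    have hmin : min (n + 1) (A + 1) = n + 1 := min_eq_left h
    rw [hmin, Finset.sum_range_succ]
    have hlast : piTilde ρ A (n + 1) (n + 1 - (n + 1))
        = (1 - ρ) * ρ ^ (n + 1) * (1 - ρ ^ (A + 1 - n)) / (1 - ρ ^ (A + 1)) := by
      have : A + 2 - (n + 1) = A + 1 - n := by omega
      simp [piTilde, h, this]
    rw [hlast]
    have hsum : ∑ q ∈ Finset.range (n + 1), piTilde ρ A q (n + 1 - q)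
        = ρ ^ (A + 2) * (∑ j ∈ Finset.range n, ρ ^ j) * (1 - ρ) ^ 2 / (1 - ρ ^ (A + 1)) := by
      rw [Finset.sum_range_succ']
      have h0 : piTilde ρ A 0 (n + 1 - 0) = 0 := by simp [piTilde]
      rw [h0, add_zero]
      have hterm : ∀ i ∈ Finset.range n, piTilde ρ A (i + 1) (n + 1 - (i + 1))
          = ρ ^ (A + 2) * ρ ^ (n - 1 - i) * (1 - ρ) ^ 2 / (1 - ρ ^ (A + 1)) := by
        intro i hi
        rw [Finset.mem_range] at hi
        have h1 : i + 1 ≤ A + 1 := by omega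
        have h2 : n + 1 - (i + 1) = n - i := by omega
        have h3 : n - i ≠ 0 := by omega
        have h4 : A + (n - i) + 1 = (A + 2) + (n - 1 - i) := by omega
        simp only [piTilde, Nat.succ_ne_zero, if_false, h1, if_pos, h2, h3, if_neg, h4,
          pow_add]
      rw [Finset.sum_congr rfl hterm]
      rw [show (∑ i ∈ Finset.range n, ρ ^ (A + 2) * ρ ^ (n - 1 - i) * (1 - ρ) ^ 2 / (1 - ρ ^ (A + 1)))
          = ρ ^ (A + 2) * (∑ i ∈ Finset.range n, ρ ^ (n - 1 - i)) * (1 - ρ) ^ 2 / (1 - ρ ^ (A + 1)) by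
        rw [Finset.mul_sum, Finset.sum_mul, Finset.sum_div]]
      rw [Finset.sum_range_reflect (fun j => ρ ^ j) n]
    rw [hsum, geom_sum_eq hρ1']
    have hx : ρ ^ n * ρ ^ (A + 1 - n) = ρ ^ (A + 1) := by
      rw [← pow_add]; congr 1; omega
    have hA2 : ρ ^ (A + 2) = ρ * (ρ ^ n * ρ ^ (A + 1 - n)) := by
      rw [hx, ← pow_succ']
    rw [hA2, ← hx, pow_succ]
    have hD' : 1 - ρ ^ n * ρ ^ (A + 1 - n) ≠ 0 := by rw [hx]; exact hD
    field_simp [hD', hρ10]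
    ring
  · -- case A + 1 < n + 1
    have hAn : A + 1 ≤ n := by omega
    have hmin : min (n + 1) (A + 1) = A + 1 := min_eq_right (by omega)
    rw [hmin, Finset.sum_range_succ']
    have h0 : piTilde ρ A 0 (n + 1 - 0) = 0 := by simp [piTilde]
    rw [h0, add_zero]
    have hterm : ∀ i ∈ Finset.range (A + 1), piTilde ρ A (i + 1) (n + 1 - (i + 1))
        = ρ ^ (n + 1) * ρ ^ (A + 1 - 1 - i) * (1 - ρ) ^ 2 / (1 - ρ ^ (A + 1)) := by
      intro i hi
      rw [Finset.mem_range] at hi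
      have h1 : i + 1 ≤ A + 1 := by omega
      have h2 : n + 1 - (i + 1) = n - i := by omega
      have h3 : n - i ≠ 0 := by omega
      have h4 : A + (n - i) + 1 = (n + 1) + (A + 1 - 1 - i) := by omega
      simp only [piTilde, Nat.succ_ne_zero, if_false, h1, if_pos, h2, h3, if_neg, h4, pow_add]
    rw [Finset.sum_congr rfl hterm]
    rw [show (∑ i ∈ Finset.range (A + 1), ρ ^ (n + 1) * ρ ^ (A + 1 - 1 - i) * (1 - ρ) ^ 2 / (1 - ρ ^ (A + 1)))
        = ρ ^ (n + 1) * (∑ i ∈ Finset.range (A + 1), ρ ^ (A + 1 - 1 - i)) * (1 - ρ) ^ 2 / (1 - ρ ^ (A + 1)) by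
      rw [Finset.mul_sum, Finset.sum_mul, Finset.sum_div]]
    rw [Finset.sum_range_reflect (fun j => ρ ^ j) (A + 1), geom_sum_eq hρ1']
    field_simp
    ring
end

section
/- For ρ ∈ (0,1) and integer A ≥ 0, the sequences π̃_{q,l} of the approximating system satisfy the balance equation (λ+μ)π̃_{q,l} = λπ̃_{q-1,l} + μπ̃_{q+1,l} for all 2 ≤ q ≤ A and all l ≥ 0. -/
theorem piTilde_interior_balance
    (lam μ ρ : ℝ) (hlam : 0 < lam) (hμ : 0 < μ)
    (hρ : ρ = lam / μ) (hρ1 : ρ < 1) (A : ℕ) :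
    ∀ q l : ℕ, 2 ≤ q → q ≤ A →
      (lam + μ) * piTilde ρ A q l
        = lam * piTilde ρ A (q - 1) l + μ * piTilde ρ A (q + 1) l := by
  intro q l hq hA
  obtain ⟨k, rfl⟩ : ∃ k, q = k + 2 := ⟨q - 2, by omega⟩
  obtain ⟨m, rfl⟩ : ∃ m, A = k + 2 + m := ⟨A - (k + 2), by omega⟩
  have hρ0 : 0 < ρ := hρ ▸ div_pos hlam hμ
  have hlam' : lam = ρ * μ := by rw [hρ]; field_simp
  have hden : (1 : ℝ) - ρ ^ (k + 2 + m + 1) ≠ 0 := by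
    have := pow_lt_one₀ hρ0.le hρ1 (by omega : k + 2 + m + 1 ≠ 0)
    linarith
  have e1 : k + 2 + m + 2 - (k + 2) = m + 2 := by omega
  have e2 : k + 2 + m + 2 - (k + 1) = m + 3 := by omega
  have e3 : k + 2 + m + 2 - (k + 2 + 1) = m + 1 := by omega
  rw [show k + 2 - 1 = k + 1 from by omega]
  simp only [piTilde, e1, e2, e3,
    if_neg (show ¬ k + 2 = 0 by omega),
    if_neg (show ¬ k + 1 = 0 by omega),
    if_neg (show ¬ k + 2 + 1 = 0 by omega),
    if_pos (show k + 2 ≤ k + 2 + m + 1 by omega),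
    if_pos (show k + 1 ≤ k + 2 + m + 1 by omega),
    if_pos (show k + 2 + 1 ≤ k + 2 + m + 1 by omega)]
  rcases Nat.eq_zero_or_pos l with rfl | hl
  · simp only [if_pos rfl, if_true]
    field_simp
    rw [hlam']
    ring
  · simp only [if_neg (by omega : ¬ l = 0)]
    ring
end

section
/- With stationary distribution π_{0,0} = 1-ρ, π_{1,0} = ρ(1-ρ), π_{q+1,0} = ρ^{q+1}(1-ρ)ν/(ν+μ) and π_{q,1} = ρ^{q+1}(1-ρ)μ/(ν+μ) for q ≥ 1 (with ρ ∈ (0,1), μ, ν > 0), the weighted congestion cost Σ_{q,l}(q² + ω·l²)π_{q,l} equals ((ν+ρμ)/(ν+μ))·Σ_{q≥0} q²ρ^q(1-ρ) + (ρ²μ/(ν+μ))·(ω + (1-ρ)/ρ). -/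
/-- Stationary distribution of the lounge system with thresholds A = 0, B = 1. -/
noncomputable def piB1 (ρ ν μ : ℝ) (q l : ℕ) : ℝ :=
  if l = 0 then
    (if q = 0 then 1 - ρ else if q = 1 then ρ * (1 - ρ) else ρ ^ q * (1 - ρ) * ν / (ν + μ))
  else if l = 1 then
    (if q = 0 then 0 else ρ ^ (q + 1) * (1 - ρ) * μ / (ν + μ))
  else 0

theorem congestion_cost_B1
    (ρ ν μ ω : ℝ) (hρ0 : 0 < ρ) (hρ1 : ρ < 1)
    (hν : 0 < ν) (hμ : 0 < μ) (hω : 0 < ω) :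
    ∑' p : ℕ × ℕ, ((p.1 : ℝ) ^ 2 + ω * (p.2 : ℝ) ^ 2) * piB1 ρ ν μ p.1 p.2
      = ((ν + ρ * μ) / (ν + μ)) * (∑' q : ℕ, (q : ℝ) ^ 2 * ρ ^ q * (1 - ρ))
        + (ρ ^ 2 * μ / (ν + μ)) * (ω + (1 - ρ) / ρ) := by
  have hρ1' : (0:ℝ) < 1 - ρ := by linarith
  have hνμ : (0:ℝ) < ν + μ := by linarith
  set F : ℕ × ℕ → ℝ := fun p => ((p.1 : ℝ) ^ 2 + ω * (p.2 : ℝ) ^ 2) * piB1 ρ ν μ p.1 p.2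
    with hF
  -- nonnegativity
  have hpi : ∀ q l, 0 ≤ piB1 ρ ν μ q l := by
    intro q l
    unfold piB1
    split_ifs <;> positivity
  have hFnn : 0 ≤ F := by
    intro p
    apply mul_nonneg _ (hpi p.1 p.2)
    positivity
  -- rows are summable (finite support in l)
  have hrow0 : ∀ q : ℕ, ∀ l ∉ ({0, 1} : Finset ℕ), F (q, l) = 0 := by
    intro q l hl
    simp only [Finset.mem_insert, Finset.mem_singleton, not_or] at hl
    simp [hF, piB1, hl.1, hl.2]
  have hrow : ∀ q : ℕ, Summable fun l => F (q, l) :=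
    fun q => summable_of_ne_finset_zero (hrow0 q)
  have hrowsum : ∀ q : ℕ, ∑' l, F (q, l) = F (q, 0) + F (q, 1) := by
    intro q
    rw [tsum_eq_sum (hrow0 q)]
    simp
  -- explicit per-q expression
  set c : ℝ := ρ * (1 - ρ) * μ / (ν + μ) with hc
  set e : ℕ → ℝ := fun q =>
      (ν * (1 - ρ) / (ν + μ)) * ((q : ℝ) ^ 2 * ρ ^ q)
      + (ρ * (1 - ρ) * μ / (ν + μ)) * ((q : ℝ) ^ 2 * ρ ^ q)
      + (ω * ρ * (1 - ρ) * μ / (ν + μ)) * ρ ^ q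
      + (if q = 1 then c else 0)
      + (if q = 0 then -(ω * c) else 0) with he
  have hkey : ∀ q : ℕ, F (q, 0) + F (q, 1) = e q := by
    intro q
    match q with
    | 0 => simp [hF, he, hc, piB1]; ring
    | 1 => simp [hF, he, hc, piB1]; field_simp; ring
    | (n + 2) =>
      simp [hF, he, hc, piB1]
      field_simp
      ring
  -- summability of pieces
  have hs2 : Summable (fun q : ℕ => (q : ℝ) ^ 2 * ρ ^ q) := by
    have := summable_pow_mul_geometric_of_norm_lt_one (R := ℝ) 2
      (r := ρ) (by rw [Real.norm_eq_abs, abs_of_pos hρ0]; exact hρ1)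
    simpa using this
  have hs0 : Summable (fun q : ℕ => ρ ^ q) :=
    summable_geometric_of_lt_one hρ0.le hρ1
  have hi1 : Summable (fun q : ℕ => if q = 1 then c else 0) :=
    summable_of_ne_finset_zero (s := {1}) (by intro b hb; simp at hb; simp [hb])
  have hi0 : Summable (fun q : ℕ => if q = 0 then -(ω * c) else 0) :=
    summable_of_ne_finset_zero (s := {0}) (by intro b hb; simp at hb; simp [hb])
  have hse : Summable e := by
    apply ((((hs2.mul_left _).add (hs2.mul_left _)).add (hs0.mul_left _)).add hi1).add hi0
  -- summability of F and product tsum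
  have hFs : Summable F := by
    refine (summable_prod_of_nonneg hFnn).2 ⟨hrow, ?_⟩
    apply Summable.congr hse
    intro q
    rw [hrowsum q, hkey q]
  -- compute
  have T := ∑' q : ℕ, (q : ℝ) ^ 2 * ρ ^ q
  calc ∑' p : ℕ × ℕ, F p = ∑' (q : ℕ) (l : ℕ), F (q, l) := Summable.tsum_prod' hFs hrow
    _ = ∑' q : ℕ, e q := by
        apply tsum_congr
        intro q
        rw [hrowsum q, hkey q]
    _ = (ν * (1 - ρ) / (ν + μ)) * (∑' q : ℕ, (q : ℝ) ^ 2 * ρ ^ q)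
        + (ρ * (1 - ρ) * μ / (ν + μ)) * (∑' q : ℕ, (q : ℝ) ^ 2 * ρ ^ q)
        + (ω * ρ * (1 - ρ) * μ / (ν + μ)) * (1 - ρ)⁻¹
        + c + -(ω * c) := by
        rw [Summable.tsum_add ((((hs2.mul_left _).add (hs2.mul_left _)).add (hs0.mul_left _)).add hi1) hi0,
            Summable.tsum_add (((hs2.mul_left _).add (hs2.mul_left _)).add (hs0.mul_left _)) hi1,
            Summable.tsum_add ((hs2.mul_left _).add (hs2.mul_left _)) (hs0.mul_left _),
            Summable.tsum_add (hs2.mul_left _) (hs2.mul_left _),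
            tsum_mul_left, tsum_mul_left, tsum_mul_left,
            tsum_geometric_of_lt_one hρ0.le hρ1,
            tsum_ite_eq, tsum_ite_eq]
    _ = ((ν + ρ * μ) / (ν + μ)) * (∑' q : ℕ, (q : ℝ) ^ 2 * ρ ^ q * (1 - ρ))
        + (ρ ^ 2 * μ / (ν + μ)) * (ω + (1 - ρ) / ρ) := by
        rw [tsum_mul_right, hc]
        field_simp
        ring
end
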